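/- arXiv:2402.15118 — 2 statements merged into one kernel-verified Lean document; each statement's English description precedes it below -/
import Mathlib

section
/- Let n ≥ 3 be an integer and define f : ℝ → ℝ by f(r) = (r · log r)^{-(n−2)/2} for r > 1. Then there exists r₀ > 1 such that for all r ≥ r₀ one has f''(r) + ((n−1)/r) · f'(r) < 0; indeed this holds whenever (log r)² > n/(n−2). -/
open Real Filter Topology

/-!
Write `g r = r log r`, `L = log r` and `α = -(n - 2)/2`. The chain rule gives
`f' = α g^(α-1) (L + 1)` and `f'' = α (α - 1) g^(α-2) (L + 1)² + α g^(α-1) / r`, so the radial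
Laplacian is `α g^(α-2)` times `(α - 1)(L + 1)² + L + (n - 1) L (L + 1)`. For this particular `α`
the linear terms cancel and the bracket is `((n - 2) L² - n) / 2`; since `α < 0 < g`, the radial
Laplacian is negative exactly when `L² > n / (n - 2)`; for `r ≥ e²` this follows from
`L² ≥ 4 > 3 ≥ n / (n - 2)`.
-/

noncomputable def radialLaplacian (n : ℝ) (f : ℝ → ℝ) (r : ℝ) : ℝ :=
  deriv (deriv f) r + ((n - 1) / r) * deriv f r

section MulLogRpow

variable {x : ℝ} (α : ℝ)

lemma hasDerivAt_mul_log_rpow (hx : x * log x ≠ 0) :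
    HasDerivAt (fun y => (y * log y) ^ α) (α * (x * log x) ^ (α - 1) * (log x + 1)) x := by
  convert (hasDerivAt_mul_log (left_ne_zero_of_mul hx)).rpow_const (p := α) (Or.inl hx) using 1
  ring

lemma deriv_mul_log_rpow_eventuallyEq (hx : x * log x ≠ 0) :
    deriv (fun y => (y * log y) ^ α) =ᶠ[𝓝 x]
      fun y => α * (y * log y) ^ (α - 1) * (log y + 1) := by
  have hopen : IsOpen {y : ℝ | y * log y ≠ 0} := isOpen_ne_fun continuous_mul_log continuous_const
  filter_upwards [hopen.mem_nhds hx] with y hy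
  exact (hasDerivAt_mul_log_rpow α hy).deriv

lemma hasDerivAt_deriv_mul_log_rpow (hx : x * log x ≠ 0) :
    HasDerivAt (deriv fun y => (y * log y) ^ α)
      (α * (α - 1) * (x * log x) ^ (α - 2) * (log x + 1) ^ 2
        + α * (x * log x) ^ (α - 1) / x) x := by
  have hx0 : x ≠ 0 := left_ne_zero_of_mul hx
  refine HasDerivAt.congr_of_eventuallyEq ?_ (deriv_mul_log_rpow_eventuallyEq α hx)
  refine ((((hasDerivAt_mul_log hx0).rpow_const (p := α - 1) (Or.inl hx)).const_mul α).mul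
    ((hasDerivAt_log hx0).add_const 1)).congr_deriv ?_
  rw [show α - 1 - 1 = α - 2 by ring]
  ring

lemma radialLaplacian_mul_log_rpow (n : ℝ) (hx : x * log x ≠ 0) :
    radialLaplacian n (fun y => (y * log y) ^ α) x =
      α * (x * log x) ^ (α - 2) *
        ((α - 1) * (log x + 1) ^ 2 + log x + (n - 1) * log x * (log x + 1)) := by
  have hx0 : x ≠ 0 := left_ne_zero_of_mul hx
  have hpow : (x * log x) ^ (α - 1) = (x * log x) ^ (α - 2) * (x * log x) := by
    rw [← rpow_add_one hx]
    ring_nf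
  rw [radialLaplacian, (hasDerivAt_deriv_mul_log_rpow α hx).deriv,
    (hasDerivAt_mul_log_rpow α hx).deriv, hpow]
  field_simp

end MulLogRpow

lemma radialLaplacian_mul_log_rpow_neg {n r : ℝ} (hn : 2 < n) (hr : 1 < r)
    (hL : n / (n - 2) < log r ^ 2) :
    radialLaplacian n (fun y => (y * log y) ^ (-((n - 2) / 2))) r < 0 := by
  have hbracket : (-((n - 2) / 2) - 1) * (log r + 1) ^ 2 + log r
      + (n - 1) * log r * (log r + 1) = ((n - 2) * log r ^ 2 - n) / 2 := by ring
  have hquad : 0 < (n - 2) * log r ^ 2 - n := by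
    rw [div_lt_iff₀ (by linarith)] at hL
    linarith
  rw [radialLaplacian_mul_log_rpow _ n (mul_log_pos hr).ne', hbracket]
  refine mul_neg_of_neg_of_pos (mul_neg_of_neg_of_pos (by linarith) ?_) (by positivity)
  exact rpow_pos_of_pos (mul_log_pos hr) _

/-- Strict superharmonicity of the radial profile `v = (r ln r)^{-(n-2)/2}` outside
a compact set: for `n ≥ 3` and `f r = (r · log r)^{-(n−2)/2}`, there is `r₀ > 1`
such that `f''(r) + ((n−1)/r) f'(r) < 0` for all `r ≥ r₀`; indeed this holds
whenever `r > 1` and `(log r)² > n/(n−2)`. -/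
theorem radial_laplacian_eventually_negative (n : ℕ) (hn : 3 ≤ n)
    (f : ℝ → ℝ)
    (hf : ∀ r : ℝ, f r = (r * Real.log r) ^ (-(((n : ℝ) - 2) / 2))) :
    (∃ r₀ : ℝ, 1 < r₀ ∧ ∀ r : ℝ, r₀ ≤ r →
        deriv (deriv f) r + (((n : ℝ) - 1) / r) * deriv f r < 0) ∧
    (∀ r : ℝ, 1 < r → (Real.log r) ^ 2 > (n : ℝ) / ((n : ℝ) - 2) →
        deriv (deriv f) r + (((n : ℝ) - 1) / r) * deriv f r < 0) := by
  have hn' : (3 : ℝ) ≤ n := by exact_mod_cast hn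
  obtain rfl : f = fun y => (y * log y) ^ (-(((n : ℝ) - 2) / 2)) := funext hf
  have key : ∀ r : ℝ, 1 < r → (n : ℝ) / (n - 2) < log r ^ 2 → radialLaplacian n _ r < 0 :=
    fun r hr hL => radialLaplacian_mul_log_rpow_neg (by linarith) hr hL
  have he2 : 1 < exp 2 := one_lt_exp_iff.mpr two_pos
  refine ⟨⟨exp 2, he2, fun r hr => key r (he2.trans_le hr) ?_⟩, key⟩
  have hlog : 2 ≤ log r := (le_log_iff_exp_le (by linarith)).mpr hr
  have hdiv : (n : ℝ) / (n - 2) ≤ 3 := by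
    rw [div_le_iff₀ (by linarith)]
    linarith
  nlinarith
end

section
/- For every integer n ≥ 3 there exists a smooth function u : ℝⁿ → ℝ such that: (i) u(x) > 0 for all x; (ii) Δu(x) ≤ 0 for all x, where Δu denotes the sum of the second partial derivatives of u (the Euclidean Laplacian); (iii) ∫_{ℝⁿ} u(x)^{2n/(n−2)} dx < ∞; and (iv) for every unit vector e ∈ ℝⁿ, the function t ↦ u(t·e)^{2/(n−2)} is not Lebesgue integrable on [0, ∞), i.e. ∫₀^∞ u(te)^{2/(n−2)} dt = ∞. -/
open MeasureTheory

/-- The Euclidean Laplacian of `u : ℝⁿ → ℝ` at `x`, defined as the sum of the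
second derivatives of `u` along the coordinate directions. -/
noncomputable def euclideanLaplacian {n : ℕ} (u : EuclideanSpace ℝ (Fin n) → ℝ)
    (x : EuclideanSpace ℝ (Fin n)) : ℝ :=
  ∑ i : Fin n,
    iteratedDeriv 2 (fun t : ℝ => u (x + t • EuclideanSpace.single i (1 : ℝ))) 0


noncomputable def shc : ℝ := Real.exp 4
noncomputable def shL (s : ℝ) : ℝ := Real.log (shc + s)
noncomputable def shM (s : ℝ) : ℝ := (shc + s) * shL s ^ 2
noncomputable def shG (β s : ℝ) : ℝ := shM s ^ (-β)
noncomputable def shMp (s : ℝ) : ℝ := shL s * (shL s + 2)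
noncomputable def shG1 (β s : ℝ) : ℝ := -β * shM s ^ (-β - 1) * shMp s
noncomputable def shG2 (β s : ℝ) : ℝ :=
  -β * ((-β - 1) * shM s ^ (-β - 2) * shMp s * shMp s
    + shM s ^ (-β - 1) * ((2 * shL s + 2) / (shc + s)))

lemma shc_pos : 0 < shc := Real.exp_pos 4

lemma sh_base_pos {s : ℝ} (hs : 0 ≤ s) : 0 < shc + s := by
  have := shc_pos; linarith

lemma shL_ge {s : ℝ} (hs : 0 ≤ s) : 4 ≤ shL s := by
  have h : Real.exp 4 ≤ shc + s := by have := shc_pos; simp [shc] at *; linarith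
  calc (4:ℝ) = Real.log (Real.exp 4) := (Real.log_exp 4).symm
  _ ≤ shL s := Real.log_le_log (Real.exp_pos 4) h

lemma shM_pos {s : ℝ} (hs : 0 ≤ s) : 0 < shM s := by
  have h1 := sh_base_pos hs
  have h2 := shL_ge hs
  have : 0 < shL s ^ 2 := by positivity
  exact mul_pos h1 this

lemma shL_hasDeriv (s : ℝ) (hs : 0 ≤ s) : HasDerivAt shL (1 / (shc + s)) s := by
  have h1 : HasDerivAt (fun t : ℝ => shc + t) 1 s := (hasDerivAt_id s).const_add shc
  show HasDerivAt (fun t => Real.log (shc + t)) _ s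
  simpa using h1.log (sh_base_pos hs).ne'

lemma shM_hasDeriv (s : ℝ) (hs : 0 ≤ s) : HasDerivAt shM (shMp s) s := by
  have h1 : HasDerivAt (fun t : ℝ => shc + t) 1 s := (hasDerivAt_id s).const_add shc
  have hL := shL_hasDeriv s hs
  have h2 : HasDerivAt (fun t => shL t ^ 2) (2 * shL s * (1 / (shc + s))) s := by
    exact (hL.pow 2).congr_deriv (by norm_num)
  have h3 := h1.mul h2
  have hne := (sh_base_pos hs).ne'
  refine h3.congr_deriv ?_
  unfold shMp
  field_simp

lemma shG_hasDeriv (β : ℝ) (s : ℝ) (hs : 0 ≤ s) :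
    HasDerivAt (shG β) (shG1 β s) s := by
  have hM := shM_hasDeriv s hs
  have h := (Real.hasDerivAt_rpow_const (p := -β) (Or.inl (shM_pos hs).ne')).comp s hM
  exact h

lemma shMp_hasDeriv (s : ℝ) (hs : 0 ≤ s) :
    HasDerivAt shMp ((2 * shL s + 2) / (shc + s)) s := by
  have hL := shL_hasDeriv s hs
  have h := hL.mul (hL.add_const 2)
  refine h.congr_deriv ?_
  field_simp
  ring

lemma shG1_hasDeriv (β : ℝ) (s : ℝ) (hs : 0 ≤ s) :
    HasDerivAt (shG1 β) (shG2 β s) s := by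
  have hM := shM_hasDeriv s hs
  have hMp := shMp_hasDeriv s hs
  have h1 : HasDerivAt (fun t => shM t ^ (-β - 1)) ((-β - 1) * shM s ^ (-β - 2) * shMp s) s := by
    have h := (Real.hasDerivAt_rpow_const (p := -β - 1) (Or.inl (shM_pos hs).ne')).comp s hM
    refine h.congr_deriv ?_
    have : -β - 1 - 1 = -β - 2 := by ring
    rw [← this]
  have h2 := (h1.mul hMp).const_mul (-β)
  have hfe : shG1 β = fun t => -β * (shM t ^ (-β - 1) * shMp t) := by
    funext t; unfold shG1; ring
  rw [hfe]
  exact h2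

lemma sh_key (n : ℕ) (hn : 3 ≤ n) {s : ℝ} (hs : 0 ≤ s) :
    2 * (n : ℝ) * shG1 (((n:ℝ) - 2) / 4) s + 4 * s * shG2 (((n:ℝ) - 2) / 4) s ≤ 0 := by
  have hn3 : (3:ℝ) ≤ (n:ℝ) := by exact_mod_cast hn
  have hA : 0 < shM s := shM_pos hs
  have hcs : 0 < shc + s := sh_base_pos hs
  set β : ℝ := ((n:ℝ) - 2) / 4 with hβ
  obtain ⟨L, hL4, hLdef⟩ : ∃ L, 4 ≤ L ∧ shL s = L := ⟨_, shL_ge hs, rfl⟩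
  obtain ⟨P, hP0, hPdef⟩ : ∃ P, 0 ≤ P ∧ shM s ^ (-β - 2) = P :=
    ⟨_, Real.rpow_nonneg hA.le _, rfl⟩
  have hMA : shM s = (shc + s) * L ^ 2 := by rw [← hLdef]; rfl
  have h1 : shM s ^ (-β - 1) = P * ((shc + s) * L ^ 2) := by
    rw [show (-β - 1 : ℝ) = (-β - 2) + 1 by ring, Real.rpow_add_one hA.ne', hPdef, hMA]
  have hG1 : shG1 β s = -β * (P * ((shc + s) * L ^ 2)) * (L * (L + 2)) := by
    unfold shG1 shMp; rw [h1, hLdef]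
  have hG2 : shG2 β s = -β * ((-β - 1) * P * (L * (L + 2)) * (L * (L + 2))
      + (P * ((shc + s) * L ^ 2)) * ((2 * L + 2) / (shc + s))) := by
    unfold shG2 shMp; rw [h1, hPdef, hLdef]
  rw [hG1, hG2]
  have hβ0 : 0 ≤ β := by rw [hβ]; linarith
  have hβ1 : β + 1 = ((n:ℝ) + 2) / 4 := by rw [hβ]; ring
  have hexpr : 2 * (n : ℝ) * (-β * (P * ((shc + s) * L ^ 2)) * (L * (L + 2)))
      + 4 * s * (-β * ((-β - 1) * P * (L * (L + 2)) * (L * (L + 2))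
      + (P * ((shc + s) * L ^ 2)) * ((2 * L + 2) / (shc + s))))
      = P * (β * (2 * L^2 * (-((n:ℝ) * shc * L * (L + 2))
          - s * (((n:ℝ) - 2) / 2 * L ^ 2 - 2 * (n:ℝ))))) := by
    rw [hβ]
    field_simp
    ring
  rw [hexpr]
  have hL2 : (16:ℝ) ≤ L ^ 2 := by nlinarith
  have hc0 : (0:ℝ) < shc := shc_pos
  have ht1 : 0 ≤ (n:ℝ) * shc * L * (L + 2) := by positivity
  have ht2 : 0 ≤ ((n:ℝ) - 2) / 2 * L ^ 2 - 2 * (n:ℝ) := by nlinarith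
  have hneg : (-((n:ℝ) * shc * L * (L + 2)) - s * (((n:ℝ) - 2) / 2 * L ^ 2 - 2 * (n:ℝ))) ≤ 0 := by
    have := mul_nonneg hs ht2
    linarith
  have h2 : 2 * L ^ 2 * (-((n:ℝ) * shc * L * (L + 2))
      - s * (((n:ℝ) - 2) / 2 * L ^ 2 - 2 * (n:ℝ))) ≤ 0 :=
    mul_nonpos_of_nonneg_of_nonpos (by positivity) hneg
  exact mul_nonpos_of_nonneg_of_nonpos hP0 (mul_nonpos_of_nonneg_of_nonpos hβ0 h2)

lemma sh_norm_sq_sum {n : ℕ} (x : EuclideanSpace ℝ (Fin n)) :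
    ‖x‖ ^ 2 = ∑ i, x i ^ 2 := by
  rw [EuclideanSpace.norm_eq, Real.sq_sqrt (by positivity)]
  simp [sq_abs]

lemma sh_lap (n : ℕ) (β : ℝ) (x : EuclideanSpace ℝ (Fin n)) :
    euclideanLaplacian (fun y => shG β (‖y‖ ^ 2)) x
      = 4 * ‖x‖ ^ 2 * shG2 β (‖x‖ ^ 2) + 2 * n * shG1 β (‖x‖ ^ 2) := by
  unfold euclideanLaplacian
  beta_reduce
  have hterm : ∀ i : Fin n,
      iteratedDeriv 2 (fun t : ℝ => shG β (‖x + t • EuclideanSpace.single i (1:ℝ)‖ ^ 2)) 0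
        = 4 * (x i) ^ 2 * shG2 β (‖x‖ ^ 2) + 2 * shG1 β (‖x‖ ^ 2) := by
    intro i
    set a : ℝ := x i with ha
    have hq : ∀ t : ℝ, ‖x + t • EuclideanSpace.single i (1:ℝ)‖ ^ 2
        = ‖x‖ ^ 2 + 2 * a * t + t ^ 2 := by
      intro t
      rw [norm_add_sq_real, norm_smul, EuclideanSpace.norm_single]
      rw [real_inner_smul_right]
      have : (inner ℝ x (EuclideanSpace.single i (1:ℝ)) : ℝ) = a := by
        rw [EuclideanSpace.inner_single_right]; simp [ha]
      rw [this]
      simp [norm_one, mul_pow]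
      ring
    set q : ℝ → ℝ := fun t => ‖x‖ ^ 2 + 2 * a * t + t ^ 2 with hqdef
    have hfun : (fun t : ℝ => shG β (‖x + t • EuclideanSpace.single i (1:ℝ)‖ ^ 2))
        = fun t => shG β (q t) := by
      funext t; rw [hq t]
    rw [hfun]
    have hq0 : ∀ t : ℝ, 0 ≤ q t := by
      intro t; rw [hqdef]; simp only; rw [← hq t]; positivity
    have hqd : ∀ t : ℝ, HasDerivAt q (2 * a + 2 * t) t := by
      intro t
      have h1 : HasDerivAt (fun t : ℝ => ‖x‖ ^ 2 + 2 * a * t) (2 * a) t := by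
        simpa using ((hasDerivAt_id t).const_mul (2 * a)).const_add (‖x‖ ^ 2)
      have h2 : HasDerivAt (fun t : ℝ => t ^ 2) (2 * t) t := by
        simpa using hasDerivAt_pow 2 t
      exact h1.add h2
    have hd1 : deriv (fun t => shG β (q t)) = fun t => shG1 β (q t) * (2 * a + 2 * t) := by
      funext t
      exact (((shG_hasDeriv β (q t) (hq0 t)).comp t (hqd t))).deriv
    have h2d : HasDerivAt (fun t => shG1 β (q t) * (2 * a + 2 * t))
        ((shG2 β (q 0) * (2 * a + 2 * 0)) * (2 * a + 2 * 0) + shG1 β (q 0) * 2) 0 := by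
      have hA : HasDerivAt (fun t => shG1 β (q t)) (shG2 β (q 0) * (2 * a + 2 * 0)) 0 :=
        (shG1_hasDeriv β (q 0) (hq0 0)).comp 0 (hqd 0)
      have hB : HasDerivAt (fun t : ℝ => 2 * a + 2 * t) 2 0 := by
        simpa using ((hasDerivAt_id (0:ℝ)).const_mul 2).const_add (2 * a)
      exact hA.mul hB
    have hq00 : q 0 = ‖x‖ ^ 2 := by rw [hqdef]; simp
    rw [iteratedDeriv_succ, iteratedDeriv_one, hd1]
    rw [h2d.deriv, hq00]
    ring
  rw [Finset.sum_congr rfl (fun i _ => hterm i)]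
  generalize hC2 : shG2 β (‖x‖ ^ 2) = C2
  generalize hC1 : shG1 β (‖x‖ ^ 2) = C1
  rw [Finset.sum_add_distrib, Finset.sum_const, Finset.card_univ, Fintype.card_fin,
    nsmul_eq_mul, ← Finset.sum_mul, ← Finset.mul_sum, ← sh_norm_sq_sum x]
  ring

lemma sh_pos (n : ℕ) (β : ℝ) (x : EuclideanSpace ℝ (Fin n)) : 0 < shG β (‖x‖ ^ 2) :=
  Real.rpow_pos_of_pos (shM_pos (by positivity)) _

lemma sh_smooth (n : ℕ) (β : ℝ) :
    ContDiff ℝ (⊤ : ℕ∞) (fun x : EuclideanSpace ℝ (Fin n) => shG β (‖x‖ ^ 2)) := by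
  rw [contDiff_iff_contDiffAt]
  intro x
  show ContDiffAt ℝ (⊤ : ℕ∞)
    (fun y : EuclideanSpace ℝ (Fin n) =>
      ((shc + ‖y‖ ^ 2) * Real.log (shc + ‖y‖ ^ 2) ^ 2) ^ (-β)) x
  have hpos : 0 < shc + ‖x‖ ^ 2 := sh_base_pos (by positivity)
  have h0 : ContDiffAt ℝ (⊤ : ℕ∞) (fun y : EuclideanSpace ℝ (Fin n) => shc + ‖y‖ ^ 2) x :=
    contDiffAt_const.add (contDiff_norm_sq ℝ).contDiffAt
  have hlog : ContDiffAt ℝ (⊤ : ℕ∞)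
      (fun y : EuclideanSpace ℝ (Fin n) => Real.log (shc + ‖y‖ ^ 2)) x :=
    ContDiffAt.comp (g := Real.log) x (Real.contDiffAt_log.mpr hpos.ne') h0
  have hM : ContDiffAt ℝ (⊤ : ℕ∞)
      (fun y : EuclideanSpace ℝ (Fin n) =>
        (shc + ‖y‖ ^ 2) * Real.log (shc + ‖y‖ ^ 2) ^ 2) x :=
    h0.mul (hlog.pow 2)
  have hMne : ((shc + ‖x‖ ^ 2) * Real.log (shc + ‖x‖ ^ 2) ^ 2) ≠ 0 := by
    have := shM_pos (s := ‖x‖ ^ 2) (by positivity)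
    exact this.ne'
  exact hM.rpow_const_of_ne hMne

lemma sh_X_pos (t : ℝ) : 0 < shc + t ^ 2 := sh_base_pos (by positivity)

lemma sh_L_sq_ge (t : ℝ) : 4 ≤ shL (t ^ 2) := shL_ge (by positivity)

lemma sh_h_cont : Continuous (fun t : ℝ => shM (t ^ 2) ^ (-(1:ℝ)/2)) := by
  have hM : Continuous (fun t : ℝ => shM (t ^ 2)) := by
    have h1 : Continuous (fun t : ℝ => shc + t ^ 2) := by continuity
    have h2 : Continuous (fun t : ℝ => Real.log (shc + t ^ 2)) := by
      rw [continuous_iff_continuousAt]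
      exact fun t => (h1.continuousAt).log (sh_X_pos t).ne'
    exact h1.mul (h2.pow 2)
  exact hM.rpow_const (fun t => Or.inl (shM_pos (by positivity)).ne')

lemma sh_ray_div : ¬ IntegrableOn (fun t : ℝ => shM (t ^ 2) ^ (-(1:ℝ)/2)) (Set.Ici (0:ℝ)) := by
  intro hI
  set h : ℝ → ℝ := fun t => shM (t ^ 2) ^ (-(1:ℝ)/2) with hhdef
  have hh0 : ∀ t, 0 ≤ h t := fun t => Real.rpow_nonneg (shM_pos (by positivity)).le _
  set G : ℝ → ℝ := fun t => Real.log (Real.log (shc + t ^ 2)) with hGdef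
  set G' : ℝ → ℝ := fun t => 2 * t / ((shc + t ^ 2) * Real.log (shc + t ^ 2)) with hG'def
  have hLpos : ∀ t : ℝ, 0 < Real.log (shc + t ^ 2) := fun t => by
    have := sh_L_sq_ge t; unfold shL at this; linarith
  have hGd : ∀ t : ℝ, HasDerivAt G (G' t) t := by
    intro t
    have h1 : HasDerivAt (fun t : ℝ => shc + t ^ 2) (2 * t) t := by
      simpa using (hasDerivAt_pow 2 t).const_add shc
    have h2 := (h1.log (sh_X_pos t).ne').log (hLpos t).ne'
    convert h2 using 1
    rw [hG'def]
    field_simp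
  have hG'cont : Continuous G' := by
    apply Continuous.div (by continuity)
    · apply Continuous.mul (by continuity)
      rw [continuous_iff_continuousAt]
      exact fun t => (ContinuousAt.log (by fun_prop) (sh_X_pos t).ne')
    · intro t
      exact (mul_pos (sh_X_pos t) (hLpos t)).ne'
  have hbound : ∀ t : ℝ, 0 ≤ t → G' t ≤ 2 * h t := by
    intro t ht
    have hX : 0 < shc + t ^ 2 := sh_X_pos t
    have hL : 0 < Real.log (shc + t ^ 2) := hLpos t
    have hsplit : h t = (shc + t ^ 2) ^ (-(1:ℝ)/2) * (Real.log (shc + t ^ 2))⁻¹ := by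
      rw [hhdef]
      show shM (t ^ 2) ^ (-(1:ℝ)/2) = _
      unfold shM shL
      rw [Real.mul_rpow hX.le (by positivity)]
      congr 1
      rw [← Real.rpow_natCast (Real.log (shc + t^2)) 2, ← Real.rpow_mul hL.le]
      norm_num [Real.rpow_neg_one]
    have key : t * (shc + t ^ 2)⁻¹ ≤ (shc + t ^ 2) ^ (-(1:ℝ)/2) := by
      have ht2 : t ≤ (shc + t ^ 2) ^ ((1:ℝ)/2) := by
        have : t = (t ^ 2) ^ ((1:ℝ)/2) := by
          rw [← Real.rpow_natCast t 2, ← Real.rpow_mul (by positivity)]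
          norm_num
        nth_rewrite 1 [this]
        apply Real.rpow_le_rpow (by positivity) (by nlinarith [shc_pos]) (by norm_num)
      calc t * (shc + t ^ 2)⁻¹ ≤ (shc + t ^ 2) ^ ((1:ℝ)/2) * (shc + t ^ 2)⁻¹ := by
            apply mul_le_mul_of_nonneg_right ht2 (by positivity)
      _ = (shc + t ^ 2) ^ (-(1:ℝ)/2) := by
            rw [← Real.rpow_neg_one (shc + t ^ 2), ← Real.rpow_add hX]
            norm_num
    rw [hsplit, hG'def]
    show 2 * t / ((shc + t ^ 2) * Real.log (shc + t ^ 2)) ≤ _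
    rw [div_eq_mul_inv, mul_inv]
    calc 2 * t * ((shc + t ^ 2)⁻¹ * (Real.log (shc + t ^ 2))⁻¹)
        = 2 * (t * (shc + t ^ 2)⁻¹) * (Real.log (shc + t ^ 2))⁻¹ := by ring
      _ ≤ 2 * ((shc + t ^ 2) ^ (-(1:ℝ)/2)) * (Real.log (shc + t ^ 2))⁻¹ := by
          apply mul_le_mul_of_nonneg_right _ (by positivity)
          linarith [key]
      _ = 2 * ((shc + t ^ 2) ^ (-(1:ℝ)/2) * (Real.log (shc + t ^ 2))⁻¹) := by ring
  -- uniform bound on G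
  have hbdd : ∀ T : ℝ, 0 ≤ T → G T ≤ G 0 + 2 * ∫ t in Set.Ici (0:ℝ), h t := by
    intro T hT
    have hftc : ∫ t in (0:ℝ)..T, G' t = G T - G 0 :=
      intervalIntegral.integral_eq_sub_of_hasDerivAt (fun t _ => hGd t)
        (hG'cont.intervalIntegrable 0 T)
    have hmono : ∫ t in (0:ℝ)..T, G' t ≤ ∫ t in (0:ℝ)..T, 2 * h t := by
      apply intervalIntegral.integral_mono_on hT (hG'cont.intervalIntegrable 0 T)
        ((continuous_const.mul sh_h_cont).intervalIntegrable 0 T)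
      intro t ht
      exact hbound t ht.1
    have hle : ∫ t in (0:ℝ)..T, 2 * h t ≤ 2 * ∫ t in Set.Ici (0:ℝ), h t := by
      rw [intervalIntegral.integral_const_mul]
      apply mul_le_mul_of_nonneg_left _ (by norm_num)
      rw [intervalIntegral.integral_of_le hT]
      apply setIntegral_mono_set hI
      · exact Filter.Eventually.of_forall hh0
      · exact HasSubset.Subset.eventuallyLE (fun t ht => le_of_lt ht.1)
    linarith
  have htend : Filter.Tendsto G Filter.atTop Filter.atTop := by
    rw [hGdef]
    apply Real.tendsto_log_atTop.comp
    apply Real.tendsto_log_atTop.comp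
    apply Filter.tendsto_atTop_add_const_left
    exact Filter.tendsto_pow_atTop (by norm_num)
  obtain ⟨T, hT1, hT2⟩ := ((htend.eventually_gt_atTop (G 0 + 2 * ∫ t in Set.Ici (0:ℝ), h t)).and
    (Filter.eventually_ge_atTop 0)).exists
  exact absurd (hbdd T hT2) (not_le.mpr hT1)

lemma sh_radial_integrable {n : ℕ} (hn : 1 ≤ n) {f : ℝ → ℝ} (hf : Continuous f)
    (h0 : ∀ r, 0 ≤ f r)
    (hi : IntegrableOn (fun r => r ^ (n - 1) * f r) (Set.Ioi (0:ℝ))) :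
    Integrable (fun x : EuclideanSpace ℝ (Fin n) => f ‖x‖) := by
  haveI : Nontrivial (EuclideanSpace ℝ (Fin n)) := by
    refine ⟨⟨EuclideanSpace.single (⟨0, by omega⟩ : Fin n) (1:ℝ), 0, fun h => ?_⟩⟩
    have := congrArg (fun v : EuclideanSpace ℝ (Fin n) => v ⟨0, by omega⟩) h
    simp only [EuclideanSpace.single_apply, if_pos rfl] at this
    exact one_ne_zero this
  set g : ℝ → ENNReal := fun r => ENNReal.ofReal (f r) with hgdef
  have hgm : Measurable g := ENNReal.measurable_ofReal.comp hf.measurable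
  have hdim : Module.finrank ℝ (EuclideanSpace ℝ (Fin n)) = n := finrank_euclideanSpace_fin
  refine ⟨(hf.comp continuous_norm).aestronglyMeasurable, ?_⟩
  rw [hasFiniteIntegral_iff_ofReal (Filter.Eventually.of_forall (fun x => h0 _))]
  have h1 : ∫⁻ x : EuclideanSpace ℝ (Fin n), g ‖x‖
      = ∫⁻ x : ({(0 : EuclideanSpace ℝ (Fin n))}ᶜ : Set (EuclideanSpace ℝ (Fin n))),
          g ‖x.1‖ ∂(volume.comap (Subtype.val)) := by
    have h1' := lintegral_subtype_comap (μ := (volume : Measure (EuclideanSpace ℝ (Fin n))))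
      (measurableSet_singleton (0 : EuclideanSpace ℝ (Fin n))).compl
      (fun y : EuclideanSpace ℝ (Fin n) => g ‖y‖)
    rw [MeasureTheory.restrict_compl_singleton] at h1'
    exact h1'.symm
  have h2 : ∫⁻ x : ({(0 : EuclideanSpace ℝ (Fin n))}ᶜ : Set (EuclideanSpace ℝ (Fin n))),
          g ‖x.1‖ ∂(volume.comap (Subtype.val))
      = ∫⁻ p : Metric.sphere (0 : EuclideanSpace ℝ (Fin n)) 1 × Set.Ioi (0:ℝ), g p.2
          ∂(((volume : Measure (EuclideanSpace ℝ (Fin n))).toSphere).prod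
            (MeasureTheory.Measure.volumeIoiPow
              (Module.finrank ℝ (EuclideanSpace ℝ (Fin n)) - 1))) := by
    rw [← (Measure.measurePreserving_homeomorphUnitSphereProd
      (volume : Measure (EuclideanSpace ℝ (Fin n)))).lintegral_comp_emb
      (Homeomorph.measurableEmbedding _) (fun p => g p.2)]
    simp [homeomorphUnitSphereProd]
  have h3 : ∫⁻ p : Metric.sphere (0 : EuclideanSpace ℝ (Fin n)) 1 × Set.Ioi (0:ℝ), g p.2
          ∂(((volume : Measure (EuclideanSpace ℝ (Fin n))).toSphere).prod
            (MeasureTheory.Measure.volumeIoiPow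
              (Module.finrank ℝ (EuclideanSpace ℝ (Fin n)) - 1)))
      = ((volume : Measure (EuclideanSpace ℝ (Fin n))).toSphere Set.univ)
          * ∫⁻ r : Set.Ioi (0:ℝ), g r ∂(MeasureTheory.Measure.volumeIoiPow (n - 1)) := by
    rw [lintegral_prod (fun p : Metric.sphere (0 : EuclideanSpace ℝ (Fin n)) 1 × Set.Ioi (0:ℝ) => g p.2.1)
      ((hgm.comp (measurable_subtype_coe.comp measurable_snd)).aemeasurable)]
    rw [hdim]
    simp [lintegral_const, mul_comm]
  have h4 : ∫⁻ r : Set.Ioi (0:ℝ), g r ∂(MeasureTheory.Measure.volumeIoiPow (n - 1))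
      = ∫⁻ r in Set.Ioi (0:ℝ), ENNReal.ofReal (r ^ (n - 1)) * g r := by
    unfold MeasureTheory.Measure.volumeIoiPow
    rw [lintegral_withDensity_eq_lintegral_mul _
      (f := fun r : Set.Ioi (0:ℝ) => ENNReal.ofReal (r.1 ^ (n-1)))
      (g := fun r : Set.Ioi (0:ℝ) => g r.1)
      (by fun_prop) (by fun_prop)]
    have := lintegral_subtype_comap (μ := (volume : Measure ℝ)) (s := Set.Ioi (0:ℝ)) measurableSet_Ioi
      (fun r => ENNReal.ofReal (r ^ (n-1)) * g r)
    rw [← this]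
    rfl
  have h5 : ∫⁻ r in Set.Ioi (0:ℝ), ENNReal.ofReal (r ^ (n - 1)) * g r < ⊤ := by
    have heq : ∫⁻ r in Set.Ioi (0:ℝ), ENNReal.ofReal (r ^ (n - 1)) * g r
        = ∫⁻ r in Set.Ioi (0:ℝ), ENNReal.ofReal (r ^ (n - 1) * f r) := by
      apply setLIntegral_congr_fun measurableSet_Ioi
      intro r hr
      have hr' : (0:ℝ) ≤ r := le_of_lt hr
      rw [hgdef]
      exact (ENNReal.ofReal_mul (by positivity)).symm
    rw [heq]
    calc ∫⁻ r in Set.Ioi (0:ℝ), ENNReal.ofReal (r ^ (n - 1) * f r)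
        ≤ ∫⁻ r in Set.Ioi (0:ℝ), ‖r ^ (n - 1) * f r‖₊ := by
          apply lintegral_mono
          intro r
          exact (ENNReal.ofReal_le_ofReal (le_abs_self _)).trans
            (le_of_eq (Real.enorm_eq_ofReal_abs _).symm)
      _ < ⊤ := hi.2
  calc ∫⁻ x : EuclideanSpace ℝ (Fin n), ENNReal.ofReal (f ‖x‖)
      = ∫⁻ x : EuclideanSpace ℝ (Fin n), g ‖x‖ := rfl
    _ < ⊤ := by
        rw [h1, h2, h3, h4]
        exact ENNReal.mul_lt_top (measure_lt_top _ _) h5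

lemma sh_le_rpow_half {t : ℝ} (ht : 0 ≤ t) : t ≤ (shc + t ^ 2) ^ ((1:ℝ)/2) := by
  have h : t = (t ^ 2) ^ ((1:ℝ)/2) := by
    rw [← Real.rpow_natCast t 2, ← Real.rpow_mul ht]
    norm_num
  nth_rewrite 1 [h]
  exact Real.rpow_le_rpow (by positivity) (by nlinarith [shc_pos]) (by norm_num)

lemma sh_profile_integrable (n : ℕ) (hn : 3 ≤ n) :
    IntegrableOn (fun r : ℝ => r ^ (n - 1) * shM (r ^ 2) ^ (-(n:ℝ)/2)) (Set.Ioi (0:ℝ)) := by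
  set D' : ℝ → ℝ := fun r => ((n:ℝ) - 1) * (Real.log (shc + r ^ 2)) ^ (-(n:ℝ))
    * (2 * r / (shc + r ^ 2)) with hD'def
  have hLpos : ∀ r : ℝ, 0 < Real.log (shc + r ^ 2) := fun r => by
    have := sh_L_sq_ge r; unfold shL at this; linarith
  have hDD : ∀ r : ℝ, HasDerivAt (fun r : ℝ => -(Real.log (shc + r ^ 2)) ^ (-((n:ℝ) - 1)))
      (D' r) r := by
    intro r
    have h1 : HasDerivAt (fun r : ℝ => shc + r ^ 2) (2 * r) r := by
      simpa using (hasDerivAt_pow 2 r).const_add shc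
    have h2 := h1.log (sh_X_pos r).ne'
    have h3 := (Real.hasDerivAt_rpow_const (p := -((n:ℝ) - 1))
      (Or.inl (hLpos r).ne')).comp r h2
    have h4 := h3.neg
    refine h4.congr_deriv ?_
    rw [hD'def]
    have he : -((n:ℝ) - 1) - 1 = -(n:ℝ) := by ring
    simp only [Function.comp]
    rw [he]
    ring
  have hD'int : IntegrableOn D' (Set.Ioi (0:ℝ)) := by
    refine integrableOn_Ioi_deriv_of_nonneg (g := fun r : ℝ =>
        -(Real.log (shc + r ^ 2)) ^ (-((n:ℝ) - 1))) (l := 0) ?_ (fun x _ => hDD x) ?_ ?_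
    · apply Continuous.continuousWithinAt
      apply Continuous.neg
      apply Continuous.rpow_const
      · rw [continuous_iff_continuousAt]
        exact fun t => (ContinuousAt.log (by fun_prop) (sh_X_pos t).ne')
      · exact fun t => Or.inl (hLpos t).ne'
    · intro x hx
      rw [hD'def]
      have hLx := hLpos x
      have hx0 : (0:ℝ) < x := hx
      have hc := shc_pos
      have h1 : (0:ℝ) ≤ (Real.log (shc + x ^ 2)) ^ (-(n:ℝ)) := Real.rpow_nonneg (by linarith) _
      have hn1 : (0:ℝ) ≤ (n:ℝ) - 1 := by
        have : (3:ℝ) ≤ (n:ℝ) := by exact_mod_cast hn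
        linarith
      have h2 : (0:ℝ) ≤ 2 * x / (shc + x ^ 2) := by positivity
      exact mul_nonneg (mul_nonneg hn1 h1) h2
    · have hXt : Filter.Tendsto (fun r : ℝ => shc + r ^ 2) Filter.atTop Filter.atTop :=
        Filter.tendsto_atTop_add_const_left _ _ (Filter.tendsto_pow_atTop (by norm_num))
      have hLt : Filter.Tendsto (fun r : ℝ => Real.log (shc + r ^ 2)) Filter.atTop
          Filter.atTop := Real.tendsto_log_atTop.comp hXt
      have hpow : Filter.Tendsto (fun y : ℝ => y ^ (-((n:ℝ) - 1))) Filter.atTop (nhds 0) := by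
        apply tendsto_rpow_neg_atTop
        have : (3:ℝ) ≤ (n:ℝ) := by exact_mod_cast hn
        linarith
      have h := (hpow.comp hLt).neg
      rw [neg_zero] at h
      exact h
  -- comparison
  have hfcont : Continuous (fun r : ℝ => r ^ (n - 1) * shM (r ^ 2) ^ (-(n:ℝ)/2)) := by
    apply Continuous.mul (by continuity)
    have hM : Continuous (fun t : ℝ => shM (t ^ 2)) := by
      have h1 : Continuous (fun t : ℝ => shc + t ^ 2) := by continuity
      have h2 : Continuous (fun t : ℝ => Real.log (shc + t ^ 2)) := by
        rw [continuous_iff_continuousAt]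
        exact fun t => (h1.continuousAt).log (sh_X_pos t).ne'
      exact h1.mul (h2.pow 2)
    exact hM.rpow_const (fun t => Or.inl (shM_pos (by positivity)).ne')
  refine Integrable.mono hD'int hfcont.aestronglyMeasurable ?_
  rw [ae_restrict_iff' measurableSet_Ioi]
  apply Filter.Eventually.of_forall
  intro r hr
  have hr0 : (0:ℝ) < r := hr
  have hX : 0 < shc + r ^ 2 := sh_X_pos r
  have hL4 : 4 ≤ Real.log (shc + r ^ 2) := by
    have := sh_L_sq_ge r; unfold shL at this; exact this
  have hL : 0 < Real.log (shc + r ^ 2) := by linarith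
  set L := Real.log (shc + r ^ 2)
  set X := shc + r ^ 2 with hXdef
  -- split the rpow
  have e1 : shM (r ^ 2) ^ (-(n:ℝ)/2) = X ^ (-(n:ℝ)/2) * L ^ (-(n:ℝ)) := by
    unfold shM shL
    rw [Real.mul_rpow hX.le (by positivity)]
    congr 1
    rw [← Real.rpow_natCast L 2, ← Real.rpow_mul hL.le]
    congr 1
    push_cast
    ring
  have e2 : X ^ (-(n:ℝ)/2) = X⁻¹ * X ^ (-(((n:ℝ) - 2)/2)) := by
    rw [← Real.rpow_neg_one X, ← Real.rpow_add hX]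
    congr 1
    ring
  have e4 : (r : ℝ) ^ (n - 2) ≤ X ^ (((n:ℝ) - 2)/2) := by
    have hcast : ((n - 2 : ℕ) : ℝ) = (n:ℝ) - 2 := by
      have : (2:ℕ) ≤ n := by omega
      push_cast [Nat.cast_sub this]
      ring
    rw [← Real.rpow_natCast r (n - 2), hcast]
    have hXe : X ^ (((n:ℝ) - 2)/2) = (X ^ ((1:ℝ)/2)) ^ ((n:ℝ) - 2) := by
      rw [← Real.rpow_mul hX.le]
      congr 1
      ring
    rw [hXe]
    apply Real.rpow_le_rpow hr0.le (sh_le_rpow_half hr0.le)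
    have : (3:ℝ) ≤ (n:ℝ) := by exact_mod_cast hn
    linarith
  have e3 : r ^ (n - 1) = r ^ (n - 2) * r := by
    rw [← pow_succ]
    congr 1
    omega
  have hfr : r ^ (n - 1) * shM (r ^ 2) ^ (-(n:ℝ)/2)
      = (r ^ (n - 2) * X ^ (-(((n:ℝ) - 2)/2))) * (r * X⁻¹ * L ^ (-(n:ℝ))) := by
    rw [e1, e2, e3]; ring
  have hb1 : r ^ (n - 2) * X ^ (-(((n:ℝ) - 2)/2)) ≤ 1 := by
    rw [Real.rpow_neg hX.le, ← div_eq_mul_inv, div_le_one (by positivity)]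
    exact e4
  have hB0 : 0 ≤ r * X⁻¹ * L ^ (-(n:ℝ)) := by positivity
  have hfle : r ^ (n - 1) * shM (r ^ 2) ^ (-(n:ℝ)/2) ≤ r * X⁻¹ * L ^ (-(n:ℝ)) := by
    rw [hfr]
    calc (r ^ (n - 2) * X ^ (-(((n:ℝ) - 2)/2))) * (r * X⁻¹ * L ^ (-(n:ℝ)))
        ≤ 1 * (r * X⁻¹ * L ^ (-(n:ℝ))) := mul_le_mul_of_nonneg_right hb1 hB0
      _ = r * X⁻¹ * L ^ (-(n:ℝ)) := one_mul _
  have hD'ge : r * X⁻¹ * L ^ (-(n:ℝ)) ≤ D' r := by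
    have h2n : (1:ℝ) ≤ 2 * ((n:ℝ) - 1) := by
      have : (3:ℝ) ≤ (n:ℝ) := by exact_mod_cast hn
      linarith
    have heqD : D' r = 2 * ((n:ℝ) - 1) * (r * X⁻¹ * L ^ (-(n:ℝ))) := by
      rw [hD'def]
      show ((n:ℝ) - 1) * L ^ (-(n:ℝ)) * (2 * r / X) = _
      rw [div_eq_mul_inv]
      ring
    rw [heqD]
    have := mul_le_mul_of_nonneg_right h2n hB0
    linarith [this]
  have hf0 : 0 ≤ r ^ (n - 1) * shM (r ^ 2) ^ (-(n:ℝ)/2) := by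
    have := shM_pos (s := r ^ 2) (by positivity)
    positivity
  rw [Real.norm_eq_abs, Real.norm_eq_abs, abs_of_nonneg hf0,
    abs_of_nonneg (le_trans hB0 hD'ge)]
  exact le_trans hfle hD'ge

/-- The analytic content of the existence of a complete finite-volume metric on
`ℝⁿ` (`n ≥ 3`) with nonnegative scalar curvature: there is a smooth positive
function `u` on `ℝⁿ` with `Δu ≤ 0`, with `∫ u^{2n/(n−2)} < ∞`, and such that
along every ray from the origin `∫₀^∞ u(te)^{2/(n−2)} dt = ∞` (i.e. the radial
function is not integrable on `[0, ∞)`). -/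
theorem exists_superharmonic_conformal_factor (n : ℕ) (hn : 3 ≤ n) :
    ∃ u : EuclideanSpace ℝ (Fin n) → ℝ,
      ContDiff ℝ (⊤ : ℕ∞) u ∧
      (∀ x, 0 < u x) ∧
      (∀ x, euclideanLaplacian u x ≤ 0) ∧
      MeasureTheory.Integrable
        (fun x : EuclideanSpace ℝ (Fin n) => u x ^ (2 * (n : ℝ) / ((n : ℝ) - 2))) ∧
      (∀ e : EuclideanSpace ℝ (Fin n), ‖e‖ = 1 →
        ¬ MeasureTheory.IntegrableOn
            (fun t : ℝ => u (t • e) ^ (2 / ((n : ℝ) - 2))) (Set.Ici (0 : ℝ))) := by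
  have hnR : (3:ℝ) ≤ (n:ℝ) := by exact_mod_cast hn
  have hne : (n:ℝ) - 2 ≠ 0 := by linarith
  set β : ℝ := ((n:ℝ) - 2) / 4 with hβ
  refine ⟨fun x => shG β (‖x‖ ^ 2), sh_smooth n β, fun x => sh_pos n β x, ?_, ?_, ?_⟩
  · -- superharmonic
    intro x
    rw [sh_lap n β x]
    have := sh_key n hn (s := ‖x‖ ^ 2) (by positivity)
    rw [← hβ] at this
    linarith
  · -- integrable
    have hconv : (fun x : EuclideanSpace ℝ (Fin n) =>
        shG β (‖x‖ ^ 2) ^ (2 * (n : ℝ) / ((n : ℝ) - 2)))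
        = fun x : EuclideanSpace ℝ (Fin n) => shM (‖x‖ ^ 2) ^ (-(n:ℝ)/2) := by
      funext x
      have hM := shM_pos (s := ‖x‖ ^ 2) (by positivity)
      show (shM (‖x‖ ^ 2) ^ (-β)) ^ (2 * (n : ℝ) / ((n : ℝ) - 2)) = _
      rw [← Real.rpow_mul hM.le]
      congr 1
      rw [hβ]
      field_simp
      ring
    rw [hconv]
    have hMc : Continuous (fun t : ℝ => shM (t ^ 2)) := by
      have h1 : Continuous (fun t : ℝ => shc + t ^ 2) := by continuity
      have h2 : Continuous (fun t : ℝ => Real.log (shc + t ^ 2)) := by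
        rw [continuous_iff_continuousAt]
        exact fun t => (h1.continuousAt).log (sh_X_pos t).ne'
      exact h1.mul (h2.pow 2)
    exact sh_radial_integrable (by omega)
      (hMc.rpow_const (fun t => Or.inl (shM_pos (s := t ^ 2) (by positivity)).ne'))
      (fun r => Real.rpow_nonneg (shM_pos (s := r ^ 2) (by positivity)).le _)
      (sh_profile_integrable n hn)
  · -- rays
    intro e he hI
    apply sh_ray_div
    have hconv : (fun t : ℝ => shG β (‖t • e‖ ^ 2) ^ (2 / ((n : ℝ) - 2)))
        = fun t : ℝ => shM (t ^ 2) ^ (-(1:ℝ)/2) := by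
      funext t
      have hts : ‖t • e‖ ^ 2 = t ^ 2 := by
        rw [norm_smul, he, mul_one, Real.norm_eq_abs, sq_abs]
      rw [hts]
      have hM := shM_pos (s := t ^ 2) (by positivity)
      show (shM (t ^ 2) ^ (-β)) ^ (2 / ((n : ℝ) - 2)) = _
      rw [← Real.rpow_mul hM.le]
      congr 1
      rw [hβ]
      field_simp
      ring
    rw [← hconv]
    exact hI
end
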